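/- For every n ≥ 2 and every point x ∈ ℝ^n, writing Q = ℝ₊^{n−1} × ℝ, the point x admits the decomposition x = P_{K_2^n}(P_Q(x)) + P_{−K_2^n}(P_Q(x)) + P_{Q°}(x), where the three summands are mutually orthogonal. -/

import Mathlib

/-!
Both `Q` and `K = K₂ⁿ` are closed convex cones, so Moreau's decomposition gives
`x = P_Q x + P_{Q°} x` and `q = P_K q + P_{K°} q` with orthogonal summands, and `K° = -K`
since the second-order cone is self-dual. It remains to see `u = P_K q ⊥ w = P_{Q°} x`.
Complementary slackness `⟪q, w⟫ = 0` makes `w` vanish wherever `q` is nonzero, and wherever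
`q` vanishes so does `u`: the reflection negating that coordinate fixes `q` and preserves `K`,
hence fixes the unique projection `u`.
-/

open Metric Set
open scoped Pointwise

/-- The second-order cone `K₂ⁿ = {x ∈ ℝⁿ : ‖(x₁, …, x_{n−1})‖₂ ≤ x_n}`, with `n = m + 1`. -/
def soc (m : ℕ) : Set (EuclideanSpace ℝ (Fin (m + 1))) :=
  {x | Real.sqrt (∑ i : Fin m, x (Fin.castSucc i) ^ 2) ≤ x (Fin.last m)}

/-- The non-negative orthant `ℝ₊ⁿ`, with `n = m + 1`. -/
def orthant (m : ℕ) : Set (EuclideanSpace ℝ (Fin (m + 1))) :=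
  {x | ∀ i, 0 ≤ x i}

/-- The set `Q = ℝ₊^{n−1} × ℝ`, with `n = m + 1`. -/
def halfOrthant (m : ℕ) : Set (EuclideanSpace ℝ (Fin (m + 1))) :=
  {x | ∀ i : Fin m, 0 ≤ x (Fin.castSucc i)}

/-- `y` is the Euclidean (metric) projection of `x` onto `C`: it is the point of `C`
closest to `x`. -/
def IsProjOn {p : ℕ} (C : Set (EuclideanSpace ℝ (Fin p)))
    (x y : EuclideanSpace ℝ (Fin p)) : Prop :=
  y ∈ C ∧ ∀ z ∈ C, ‖x - y‖ ≤ ‖x - z‖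

/-- The polar cone `K° = {y : ⟨x, y⟩ ≤ 0 for all x ∈ K}`. -/
def polarCone {p : ℕ} (K : Set (EuclideanSpace ℝ (Fin p))) :
    Set (EuclideanSpace ℝ (Fin p)) :=
  {y | ∀ x ∈ K, (inner ℝ x y : ℝ) ≤ 0}

section Projection

variable {p : ℕ} {C : Set (EuclideanSpace ℝ (Fin p))} {x y y' : EuclideanSpace ℝ (Fin p)}

theorem IsProjOn.inner_sub_nonpos (hC : Convex ℝ C) (h : IsProjOn C x y) :
    ∀ z ∈ C, inner ℝ (x - y) (z - y) ≤ 0 := by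
  have : Nonempty C := ⟨⟨y, h.1⟩⟩
  have hbdd : BddBelow (Set.range fun z : C => ‖x - z‖) :=
    ⟨0, Set.forall_mem_range.2 fun _ => norm_nonneg _⟩
  have hinf : ‖x - y‖ = ⨅ z : C, ‖x - z‖ :=
    le_antisymm (le_ciInf fun z => h.2 z z.2) (ciInf_le hbdd ⟨y, h.1⟩)
  exact (norm_eq_iInf_iff_real_inner_le_zero hC h.1).1 hinf

theorem isProjOn_of_inner_sub_nonpos (hy : y ∈ C) (h : ∀ z ∈ C, inner ℝ (x - y) (z - y) ≤ 0) :
    IsProjOn C x y := by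
  refine ⟨hy, fun z hz => ?_⟩
  have hsq : ‖x - y‖ ^ 2 ≤ ‖x - z‖ ^ 2 := by
    rw [show x - z = (x - y) - (z - y) by abel, norm_sub_sq_real (x - y) (z - y)]
    nlinarith [h z hz, sq_nonneg ‖z - y‖]
  exact (pow_le_pow_iff_left₀ (norm_nonneg _) (norm_nonneg _) two_ne_zero).1 hsq

theorem IsProjOn.unique (hC : Convex ℝ C) (h : IsProjOn C x y) (h' : IsProjOn C x y') :
    y = y' := by
  have hsum : ‖y' - y‖ ^ 2 = inner ℝ (x - y) (y' - y) + inner ℝ (x - y') (y - y') := by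
    rw [← real_inner_self_eq_norm_sq]
    simp only [inner_sub_left, inner_sub_right, real_inner_comm]
    ring
  have : ‖y' - y‖ ^ 2 ≤ 0 := by
    linarith [h.inner_sub_nonpos hC y' h'.1, h'.inner_sub_nonpos hC y h.1]
  exact (sub_eq_zero.1 (norm_le_zero_iff.1 (by nlinarith [norm_nonneg (y' - y)]))).symm

theorem IsProjOn.apply_eq_self_of_isometry (hC : Convex ℝ C) (h : IsProjOn C x y)
    {R : EuclideanSpace ℝ (Fin p) → EuclideanSpace ℝ (Fin p)} (hR : Isometry R)
    (hRC : MapsTo R C C) (hRx : R x = x) : R y = y := by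
  refine (h.unique hC ⟨hRC h.1, fun z hz => ?_⟩).symm
  calc ‖x - R y‖ = dist (R x) (R y) := by rw [hRx, dist_eq_norm]
    _ = ‖x - y‖ := by rw [hR.dist_eq, dist_eq_norm]
    _ ≤ ‖x - z‖ := h.2 z hz

end Projection

theorem EuclideanSpace.real_inner_eq_sum {p : ℕ} (a b : EuclideanSpace ℝ (Fin p)) :
    inner ℝ a b = ∑ i, a i * b i := by
  simp [PiLp.inner_apply, mul_comm]

theorem convex_polarCone {p : ℕ} (K : Set (EuclideanSpace ℝ (Fin p))) :
    Convex ℝ (polarCone K) := by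
  intro z hz z' hz' a b ha hb _ y hy
  rw [inner_add_right, real_inner_smul_right, real_inner_smul_right]
  exact add_nonpos (mul_nonpos_of_nonneg_of_nonpos ha (hz y hy))
    (mul_nonpos_of_nonneg_of_nonpos hb (hz' y hy))

section MoreauCone

variable {p : ℕ} {K : Set (EuclideanSpace ℝ (Fin p))} {x y : EuclideanSpace ℝ (Fin p)}

theorem IsProjOn.inner_sub_self_eq_zero (hK : Convex ℝ K)
    (hKsmul : ∀ z ∈ K, ∀ c : ℝ, 0 ≤ c → c • z ∈ K) (h : IsProjOn K x y) :
    inner ℝ (x - y) y = 0 := by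
  have h₀ := h.inner_sub_nonpos hK _ (hKsmul y h.1 0 le_rfl)
  have h₂ := h.inner_sub_nonpos hK _ (hKsmul y h.1 2 zero_le_two)
  rw [zero_smul, zero_sub, inner_neg_right] at h₀
  rw [show (2 : ℝ) • y - y = y by module] at h₂
  linarith

theorem IsProjOn.sub_mem_polarCone (hK : Convex ℝ K)
    (hKsmul : ∀ z ∈ K, ∀ c : ℝ, 0 ≤ c → c • z ∈ K) (h : IsProjOn K x y) :
    x - y ∈ polarCone K := by
  intro z hz
  have := h.inner_sub_nonpos hK z hz
  rw [inner_sub_right, h.inner_sub_self_eq_zero hK hKsmul, sub_zero] at this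
  rwa [real_inner_comm]

/-- Moreau's decomposition theorem. -/
theorem IsProjOn.sub_isProjOn_polarCone (hK : Convex ℝ K)
    (hKsmul : ∀ z ∈ K, ∀ c : ℝ, 0 ≤ c → c • z ∈ K) (h : IsProjOn K x y) :
    IsProjOn (polarCone K) x (x - y) := by
  refine isProjOn_of_inner_sub_nonpos (h.sub_mem_polarCone hK hKsmul) fun z hz => ?_
  have hyx := h.inner_sub_self_eq_zero hK hKsmul
  rw [sub_sub_cancel, inner_sub_right, real_inner_comm (x - y) y, hyx, sub_zero]
  exact hz y h.1

end MoreauCone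

section HalfOrthant

variable {m : ℕ}

theorem convex_halfOrthant (m : ℕ) : Convex ℝ (halfOrthant m) := by
  intro z hz z' hz' a b ha hb _ i
  exact add_nonneg (mul_nonneg ha (hz i)) (mul_nonneg hb (hz' i))

theorem smul_mem_halfOrthant (m : ℕ) :
    ∀ z ∈ halfOrthant m, ∀ c : ℝ, 0 ≤ c → c • z ∈ halfOrthant m :=
  fun _ hz _ hc i => mul_nonneg hc (hz i)

theorem last_eq_zero_of_mem_polarCone_halfOrthant {w : EuclideanSpace ℝ (Fin (m + 1))}
    (hw : w ∈ polarCone (halfOrthant m)) : w (Fin.last m) = 0 := by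
  have hmem (c : ℝ) : EuclideanSpace.single (Fin.last m) c ∈ halfOrthant m := fun i => by
    simp [(Fin.castSucc_lt_last i).ne]
  have h₁ := hw _ (hmem 1)
  have h₂ := hw _ (hmem (-1))
  simp only [EuclideanSpace.inner_single_left, conj_trivial] at h₁ h₂
  linarith

theorem castSucc_nonpos_of_mem_polarCone_halfOrthant {w : EuclideanSpace ℝ (Fin (m + 1))}
    (hw : w ∈ polarCone (halfOrthant m)) (i : Fin m) : w i.castSucc ≤ 0 := by
  have hmem : EuclideanSpace.single i.castSucc (1 : ℝ) ∈ halfOrthant m := fun j => by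
    simp only [PiLp.single_apply]; split_ifs <;> norm_num
  simpa [EuclideanSpace.inner_single_left] using hw _ hmem

/-- Complementary slackness `⟪q, w⟫ = 0` forces `w` to vanish wherever `q` does not. -/
theorem inner_eq_zero_of_inner_polarCone_halfOrthant_eq_zero
    {q u w : EuclideanSpace ℝ (Fin (m + 1))} (hq : q ∈ halfOrthant m)
    (hw : w ∈ polarCone (halfOrthant m)) (hqw : inner ℝ q w = 0)
    (hu : ∀ i : Fin m, q i.castSucc = 0 → u i.castSucc = 0) : inner ℝ u w = 0 := by
  have hterm_nonpos (i : Fin m) : q i.castSucc * w i.castSucc ≤ 0 :=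
    mul_nonpos_of_nonneg_of_nonpos (hq i) (castSucc_nonpos_of_mem_polarCone_halfOrthant hw i)
  rw [EuclideanSpace.real_inner_eq_sum, Fin.sum_univ_castSucc,
    last_eq_zero_of_mem_polarCone_halfOrthant hw, mul_zero, add_zero] at hqw ⊢
  have hterm := (Finset.sum_eq_zero_iff_of_nonpos fun i _ => hterm_nonpos i).1 hqw
  refine Finset.sum_eq_zero fun i hi => ?_
  rcases mul_eq_zero.1 (hterm i hi) with hqi | hwi
  · rw [hu i hqi, zero_mul]
  · rw [hwi, mul_zero]

end HalfOrthant

section SecondOrderCone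

variable {m : ℕ}

theorem inner_nonneg_of_mem_soc {a b : EuclideanSpace ℝ (Fin (m + 1))} (ha : a ∈ soc m)
    (hb : b ∈ soc m) : 0 ≤ inner ℝ a b := by
  have hcs := Real.sum_mul_le_sqrt_mul_sqrt Finset.univ (fun i : Fin m => -a i.castSucc)
    (fun i => b i.castSucc)
  simp only [neg_sq, neg_mul, Finset.sum_neg_distrib] at hcs
  have hlast := mul_le_mul ha hb (Real.sqrt_nonneg _) ((Real.sqrt_nonneg _).trans ha)
  rw [EuclideanSpace.real_inner_eq_sum, Fin.sum_univ_castSucc]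
  linarith

theorem neg_mem_soc_of_mem_polarCone_soc {y : EuclideanSpace ℝ (Fin (m + 1))}
    (hy : y ∈ polarCone (soc m)) : -y ∈ soc m := by
  set s := Real.sqrt (∑ i : Fin m, y i.castSucc ^ 2) with hs
  set t := y (Fin.last m)
  have hlast_nonpos : t ≤ 0 := by
    have hmem : EuclideanSpace.single (Fin.last m) (1 : ℝ) ∈ soc m := by
      simp [soc, (Fin.castSucc_lt_last _).ne]
    simpa [EuclideanSpace.inner_single_left] using hy _ hmem
  have hlift : s * s + s * t ≤ 0 := by
    set z := y + (s - t) • EuclideanSpace.single (Fin.last m) (1 : ℝ)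
    have hz_init (i : Fin m) : z i.castSucc = y i.castSucc := by
      simp [z, (Fin.castSucc_lt_last i).ne]
    have hz_last : z (Fin.last m) = s := by simp [z, t]
    have hmem : z ∈ soc m := by
      show Real.sqrt (∑ i : Fin m, z i.castSucc ^ 2) ≤ z (Fin.last m)
      simp only [hz_init, hz_last]
      exact hs.ge
    have hyy : inner ℝ y y = s * s + t * t := by
      rw [EuclideanSpace.real_inner_eq_sum, Fin.sum_univ_castSucc, hs,
        Real.mul_self_sqrt (Finset.sum_nonneg fun i _ => sq_nonneg _)]
      simp only [sq, t]
    have := hy z hmem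
    rw [inner_add_left, real_inner_smul_left, EuclideanSpace.inner_single_left, hyy] at this
    simp only [conj_trivial, one_mul] at this
    nlinarith
  have hs_nonneg : 0 ≤ s := Real.sqrt_nonneg _
  show Real.sqrt (∑ i : Fin m, (-y i.castSucc) ^ 2) ≤ -t
  simp only [neg_sq, ← hs]
  rcases hs_nonneg.eq_or_lt with hs0 | hs0
  · linarith
  · nlinarith

theorem polarCone_soc (m : ℕ) : polarCone (soc m) = -soc m := by
  ext y
  refine ⟨neg_mem_soc_of_mem_polarCone_soc, fun hy z hz => ?_⟩
  have := inner_nonneg_of_mem_soc hz hy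
  rw [inner_neg_right] at this
  linarith

theorem convex_soc (m : ℕ) : Convex ℝ (soc m) := by
  simpa [polarCone_soc] using (convex_polarCone (soc m)).neg

theorem smul_mem_soc (m : ℕ) : ∀ z ∈ soc m, ∀ c : ℝ, 0 ≤ c → c • z ∈ soc m := by
  intro z hz c hc
  show Real.sqrt (∑ i : Fin m, (c * z i.castSucc) ^ 2) ≤ c * z (Fin.last m)
  simp only [mul_pow, ← Finset.mul_sum, Real.sqrt_mul (sq_nonneg c), Real.sqrt_sq hc]
  exact mul_le_mul_of_nonneg_left hz hc

end SecondOrderCone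

section CoordReflection

variable {p : ℕ}

noncomputable def coordReflection (j : Fin p) :
    EuclideanSpace ℝ (Fin p) ≃ₗᵢ[ℝ] EuclideanSpace ℝ (Fin p) :=
  LinearIsometryEquiv.piLpCongrRight 2 fun i =>
    if i = j then LinearIsometryEquiv.neg ℝ else LinearIsometryEquiv.refl ℝ ℝ

theorem coordReflection_apply (j : Fin p) (z : EuclideanSpace ℝ (Fin p)) (i : Fin p) :
    coordReflection j z i = if i = j then -z i else z i := by
  by_cases h : i = j <;> simp [coordReflection, h]

theorem coordReflection_eq_self_iff {j : Fin p} {z : EuclideanSpace ℝ (Fin p)} :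
    coordReflection j z = z ↔ z j = 0 := by
  refine ⟨fun h => ?_, fun h => ?_⟩
  · have := congrArg (· j) h
    simp only [coordReflection_apply, if_true] at this
    linarith
  · ext i
    rw [coordReflection_apply]
    split_ifs with hij
    · rw [hij, h, neg_zero]
    · rfl

end CoordReflection

theorem mapsTo_coordReflection_soc {m : ℕ} (j : Fin m) :
    MapsTo (coordReflection j.castSucc) (soc m) (soc m) := by
  intro z hz
  show Real.sqrt (∑ i : Fin m, (coordReflection j.castSucc z i.castSucc) ^ 2)
    ≤ coordReflection j.castSucc z (Fin.last m)
  simp only [coordReflection_apply, (Fin.castSucc_lt_last j).ne', if_false, apply_ite (· ^ 2),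
    neg_sq, ite_self]
  exact hz

theorem IsProjOn.soc_castSucc_eq_zero {m : ℕ} {q u : EuclideanSpace ℝ (Fin (m + 1))}
    (hu : IsProjOn (soc m) q u) {j : Fin m} (hqj : q j.castSucc = 0) : u j.castSucc = 0 :=
  coordReflection_eq_self_iff.1 <| hu.apply_eq_self_of_isometry (convex_soc m)
    (coordReflection j.castSucc).isometry (mapsTo_coordReflection_soc j)
    (coordReflection_eq_self_iff.2 hqj)

theorem orthogonal_decomposition_soc_general
    (m : ℕ) (x q u v w : EuclideanSpace ℝ (Fin (m + 1)))
    (hq : IsProjOn (halfOrthant m) x q)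
    (hu : IsProjOn (soc m) q u)
    (hv : IsProjOn (-soc m) q v)
    (hw : IsProjOn (polarCone (halfOrthant m)) x w) :
    x = u + v + w ∧ (inner ℝ u v : ℝ) = 0 ∧ (inner ℝ u w : ℝ) = 0 ∧ (inner ℝ v w : ℝ) = 0 := by
  have hQ := convex_halfOrthant m
  have hQsmul := smul_mem_halfOrthant m
  have hK := convex_soc m
  have hKsmul := smul_mem_soc m
  have hw_eq : w = x - q :=
    hw.unique (convex_polarCone _) (hq.sub_isProjOn_polarCone hQ hQsmul)
  have hv_eq : v = q - u := by
    have := hu.sub_isProjOn_polarCone hK hKsmul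
    rw [polarCone_soc] at this
    exact hv.unique hK.neg this
  have hqw : inner ℝ q w = 0 := by
    rw [hw_eq, real_inner_comm]
    exact hq.inner_sub_self_eq_zero hQ hQsmul
  have huw : inner ℝ u w = 0 :=
    inner_eq_zero_of_inner_polarCone_halfOrthant_eq_zero hq.1 (hw_eq ▸ hq.sub_mem_polarCone
      hQ hQsmul) hqw fun _ => hu.soc_castSucc_eq_zero
  refine ⟨by rw [hv_eq, hw_eq]; abel, ?_, huw, ?_⟩
  · rw [hv_eq, real_inner_comm]
    exact hu.inner_sub_self_eq_zero hK hKsmul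
  · rw [hv_eq, inner_sub_left, hqw, huw, sub_zero]

/-- Orthogonal decomposition: with `Q = ℝ₊^{n−1} × ℝ` (`n = m + 1 ≥ 2`), every `x ∈ ℝⁿ`
decomposes as `x = P_{K₂ⁿ}(P_Q(x)) + P_{−K₂ⁿ}(P_Q(x)) + P_{Q°}(x)` with the three summands
mutually orthogonal. -/
theorem orthogonal_decomposition_soc
    (m : ℕ) (hm : 1 ≤ m) (x q u v w : EuclideanSpace ℝ (Fin (m + 1)))
    (hq : IsProjOn (halfOrthant m) x q)
    (hu : IsProjOn (soc m) q u)
    (hv : IsProjOn (-soc m) q v)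
    (hw : IsProjOn (polarCone (halfOrthant m)) x w) :
    x = u + v + w ∧ (inner ℝ u v : ℝ) = 0 ∧ (inner ℝ u w : ℝ) = 0 ∧ (inner ℝ v w : ℝ) = 0 :=
  orthogonal_decomposition_soc_general m x q u v w hq hu hv hw
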